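/- Let q_t(x) = 1_{x>0} (ct/√(2π)) x^{−3/2} exp(−γ²(x − (c/γ)t)²/(2x)) be the inverse-Gaussian density with parameters c, γ > 0. Then the bridge marginal density q_t(y) q_{T−t}(z−y)/q_T(z) equals the stable-1/2 bridge marginal density 1_{0<y≤z}(1/√(2π))(ct(T−t)/T) exp(−c²(Ty−tz)²/(2yz(z−y)))/(y−y²/z)^{3/2}; i.e., it does not depend on γ, so the bridge of an inverse-Gaussian process coincides in law with the bridge of a stable-1/2 subordinator. -/

import Mathlib

/-!
Completing the square in the exponent gives `q_t(x) = exp (γ c t - γ² x / 2) f_t(x)`, where `f_t`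
is the stable-1/2 density. The tilting factor is multiplicative along the splitting
`(t, y) + (T - t, z - y) = (T, z)`, so it cancels from the bridge ratio, and the stable-1/2
bridge ratio is a direct computation.
-/

open Real Set

/-- Inverse-Gaussian density with parameters `c, γ > 0`:
`q_t(x) = 1_{x>0} (ct/√(2π)) x^{−3/2} exp(−γ²(x − (c/γ)t)²/(2x))`. -/
noncomputable def igDen (c γ t x : ℝ) : ℝ :=
  if 0 < x then
    (c * t / Real.sqrt (2 * Real.pi)) * x ^ (-(3 : ℝ) / 2) *
      Real.exp (-(γ ^ 2 * (x - (c / γ) * t) ^ 2) / (2 * x))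
  else 0

/-- Marginal density at time `t` of the stable-1/2 bridge from `0` at time `0` to `z`
at time `T`, with activity parameter `c`. -/
noncomputable def stableBridgeDen (c T t z y : ℝ) : ℝ :=
  if 0 < y ∧ y ≤ z then
    (1 / Real.sqrt (2 * Real.pi)) * (c * t * (T - t) / T) *
      (Real.exp (-(c ^ 2 * (T * y - t * z) ^ 2) / (2 * y * z * (z - y))) /
        (y - y ^ 2 / z) ^ ((3 : ℝ) / 2))
  else 0

noncomputable def stableHalfDen (c t x : ℝ) : ℝ :=
  if 0 < x then
    (c * t / √(2 * π)) * x ^ (-(3 : ℝ) / 2) * exp (-(c ^ 2 * t ^ 2) / (2 * x))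
  else 0

theorem igDen_eq_exp_mul_stableHalfDen {γ : ℝ} (hγ : γ ≠ 0) (c t x : ℝ) :
    igDen c γ t x = exp (γ * c * t - γ ^ 2 * x / 2) * stableHalfDen c t x := by
  unfold igDen stableHalfDen
  split_ifs with hx
  · have hexponent : -(γ ^ 2 * (x - c / γ * t) ^ 2) / (2 * x)
        = (γ * c * t - γ ^ 2 * x / 2) + -(c ^ 2 * t ^ 2) / (2 * x) := by
      field_simp
      ring
    rw [hexponent, exp_add]
    ring
  · simp

theorem igDen_bridge_eq_stableHalfDen_bridge {γ : ℝ} (hγ : γ ≠ 0) (c T t z y : ℝ) :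
    igDen c γ t y * igDen c γ (T - t) (z - y) / igDen c γ T z
      = stableHalfDen c t y * stableHalfDen c (T - t) (z - y) / stableHalfDen c T z := by
  have htilt : exp (γ * c * T - γ ^ 2 * z / 2)
      = exp (γ * c * t - γ ^ 2 * y / 2) *
          exp (γ * c * (T - t) - γ ^ 2 * (z - y) / 2) := by
    rw [← exp_add]
    ring_nf
  simp only [igDen_eq_exp_mul_stableHalfDen hγ, htilt]
  rw [mul_mul_mul_comm, mul_div_mul_left _ _ (by positivity)]

theorem stableHalfDen_bridge_of_lt {c T : ℝ} (hc : c ≠ 0) (hT : T ≠ 0) {t y z : ℝ} (hy : 0 < y)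
    (hyz : y < z) :
    stableHalfDen c t y * stableHalfDen c (T - t) (z - y) / stableHalfDen c T z
      = stableBridgeDen c T t z y := by
  have hw : 0 < z - y := sub_pos.2 hyz
  have hz : 0 < z := hy.trans hyz
  simp only [stableHalfDen, stableBridgeDen, if_pos hy, if_pos hw, if_pos hz,
    if_pos (And.intro hy hyz.le)]
  have hexponent : -(c ^ 2 * t ^ 2) / (2 * y) + -(c ^ 2 * (T - t) ^ 2) / (2 * (z - y))
      - -(c ^ 2 * T ^ 2) / (2 * z) = -(c ^ 2 * (T * y - t * z) ^ 2) / (2 * y * z * (z - y)) := by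
    field_simp
    ring
  have hpow : y ^ (-(3 : ℝ) / 2) * (z - y) ^ (-(3 : ℝ) / 2) / z ^ (-(3 : ℝ) / 2)
      = ((y - y ^ 2 / z) ^ ((3 : ℝ) / 2))⁻¹ := by
    have hsplit : y - y ^ 2 / z = y * (z - y) / z := by field_simp
    rw [hsplit, div_rpow (by positivity) hz.le, mul_rpow hy.le hw.le, neg_div,
      rpow_neg hy.le, rpow_neg hw.le, rpow_neg hz.le]
    field_simp
  rw [← hexponent, exp_sub, exp_add, div_eq_mul_inv _ ((y - y ^ 2 / z) ^ _), ← hpow]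
  field_simp

theorem stableHalfDen_bridge {c T : ℝ} (hc : c ≠ 0) (hT : T ≠ 0) {t y z : ℝ} (hy : 0 < y)
    (hyz : y ≤ z) :
    stableHalfDen c t y * stableHalfDen c (T - t) (z - y) / stableHalfDen c T z
      = stableBridgeDen c T t z y := by
  rcases hyz.eq_or_lt with rfl | hlt
  · -- both sides vanish, the right one through division by `0 ^ (3 / 2) = 0`
    have hdeg : y - y ^ 2 / y = 0 := by field_simp; ring
    simp [stableHalfDen, stableBridgeDen, hy, hdeg]
  · exact stableHalfDen_bridge_of_lt hc hT hy hlt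

theorem ig_bridge_eq_stable_half_bridge_general (c γ T t z y : ℝ)
    (hc : 0 < c) (hγ : 0 < γ) (ht : 0 < t) (htT : t < T)
    (hy0 : 0 < y) (hyz : y ≤ z) :
    igDen c γ t y * igDen c γ (T - t) (z - y) / igDen c γ T z
      = stableBridgeDen c T t z y := by
  rw [igDen_bridge_eq_stableHalfDen_bridge hγ.ne',
    stableHalfDen_bridge hc.ne' (ht.trans htT).ne' hy0 hyz]

/-- The bridge marginal density of an inverse-Gaussian process coincides with the
stable-1/2 bridge marginal density; in particular it does not depend on `γ`, so the
bridge of an IG process is identical in law to the bridge of a stable-1/2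
subordinator. -/
theorem ig_bridge_eq_stable_half_bridge (c γ T t z y : ℝ)
    (hc : 0 < c) (hγ : 0 < γ) (ht : 0 < t) (htT : t < T) (hz : 0 < z)
    (hy0 : 0 < y) (hyz : y ≤ z) :
    igDen c γ t y * igDen c γ (T - t) (z - y) / igDen c γ T z
      = stableBridgeDen c T t z y :=
  ig_bridge_eq_stable_half_bridge_general c γ T t z y hc hγ ht htT hy0 hyz
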